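/- arXiv:2009.06409 — 6 statements merged into one kernel-verified Lean document; each statement's English description precedes it below -/
import Mathlib

section
/- Consider the SIR model. If either (i) R₀ ≤ N/S(0) and I(0) ≤ M, or (ii) N/S(0) < R₀ ≤ N/(N−M), then I(t) ≤ M for all t ≥ 0. -/
/-!
With `β = γ R₀ / N`: below the threshold, `β S ≤ γ` holds at `t = 0` and persists since `S` decreases, so `I` is
nonincreasing and stays below `I(0) ≤ M`. Above it, `I + S - (γ/β) log S` is a first integral
of the system; since `x - (γ/β) log x` is minimal at `x = γ/β ≤ S(0)`, this gives
`I(t) ≤ I(0) + S(0) - γ/β ≤ N - N/R₀ ≤ M`.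
-/

open Set Real

section Calculus

variable {f f' : ℝ → ℝ} {a : ℝ}

lemma monotoneOn_Ici_of_hasDerivAt_nonneg (hf : ∀ t ≥ a, HasDerivAt f (f' t) t)
    (hf' : ∀ t ≥ a, 0 ≤ f' t) : MonotoneOn f (Ici a) :=
  monotoneOn_of_hasDerivWithinAt_nonneg (convex_Ici a)
    (fun t ht ↦ (hf t ht).continuousAt.continuousWithinAt)
    (fun t ht ↦ (hf t (interior_subset ht)).hasDerivWithinAt)
    (fun t ht ↦ hf' t (interior_subset ht))

lemma antitoneOn_Ici_of_hasDerivAt_nonpos (hf : ∀ t ≥ a, HasDerivAt f (f' t) t)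
    (hf' : ∀ t ≥ a, f' t ≤ 0) : AntitoneOn f (Ici a) :=
  antitoneOn_of_hasDerivWithinAt_nonpos (convex_Ici a)
    (fun t ht ↦ (hf t ht).continuousAt.continuousWithinAt)
    (fun t ht ↦ (hf t (interior_subset ht)).hasDerivWithinAt)
    (fun t ht ↦ hf' t (interior_subset ht))

lemma eq_of_hasDerivAt_zero_Ici (hf : ∀ t ≥ a, HasDerivAt f 0 t) : ∀ t ≥ a, f t = f a :=
  fun t ht ↦ constant_of_has_deriv_right_zero
    (fun s hs ↦ (hf s hs.1).continuousAt.continuousWithinAt)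
    (fun s hs ↦ (hf s hs.1).hasDerivWithinAt) t ⟨ht, le_rfl⟩

/-- `f t * exp (t * K)` is nondecreasing, so `f` decays at most exponentially. -/
lemma pos_of_hasDerivAt_ge_neg_mul {K : ℝ} (hf : ∀ t ≥ a, HasDerivAt f (f' t) t)
    (hf' : ∀ t ≥ a, -K * f t ≤ f' t) (ha : 0 < f a) : ∀ t ≥ a, 0 < f t := by
  have hmono : MonotoneOn (fun t ↦ f t * exp (t * K)) (Ici a) := by
    refine monotoneOn_Ici_of_hasDerivAt_nonneg
      (fun t ht ↦ (hf t ht).mul ((hasDerivAt_mul_const K).exp)) fun t ht ↦ ?_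
    have : 0 ≤ (f' t + K * f t) * exp (t * K) :=
      mul_nonneg (by linarith [hf' t ht]) (exp_pos _).le
    linarith
  intro t ht
  have h : f a * exp (a * K) ≤ f t * exp (t * K) := hmono self_mem_Ici ht ht
  exact pos_of_mul_pos_left ((mul_pos ha (exp_pos _)).trans_le h) (exp_pos _).le

lemma self_sub_mul_log_self_le {c x : ℝ} (hc : 0 < c) (hx : 0 < x) :
    c - c * log c ≤ x - c * log x := by
  have h := mul_le_mul_of_nonneg_left (log_le_sub_one_of_pos (div_pos hx hc)) hc.le
  rw [log_div hx.ne' hc.ne', mul_sub, mul_sub, mul_div_cancel₀ x hc.ne'] at h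
  linarith

end Calculus

section SIR

variable {N β γ : ℝ} {S I : ℝ → ℝ}

lemma sir_susceptible_pos (hβ : 0 ≤ β) (hS' : ∀ t ≥ (0:ℝ), HasDerivAt S (-β * S t * I t) t)
    (hSnn : ∀ t ≥ (0:ℝ), 0 ≤ S t) (hIle : ∀ t ≥ (0:ℝ), I t ≤ N) (hS0 : 0 < S 0) :
    ∀ t ≥ (0:ℝ), 0 < S t :=
  pos_of_hasDerivAt_ge_neg_mul (K := β * N) hS' (fun t ht ↦ by
    nlinarith [mul_le_mul_of_nonneg_left (hIle t ht) (mul_nonneg hβ (hSnn t ht))]) hS0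

lemma sir_susceptible_antitoneOn (hβ : 0 ≤ β) (hS' : ∀ t ≥ (0:ℝ), HasDerivAt S (-β * S t * I t) t)
    (hSnn : ∀ t ≥ (0:ℝ), 0 ≤ S t) (hInn : ∀ t ≥ (0:ℝ), 0 ≤ I t) : AntitoneOn S (Ici 0) :=
  antitoneOn_Ici_of_hasDerivAt_nonpos hS' fun t ht ↦ by
    have := mul_nonneg (mul_nonneg hβ (hSnn t ht)) (hInn t ht)
    linarith

lemma sir_infected_antitoneOn (hβ : 0 ≤ β) (hS' : ∀ t ≥ (0:ℝ), HasDerivAt S (-β * S t * I t) t)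
    (hI' : ∀ t ≥ (0:ℝ), HasDerivAt I (β * S t * I t - γ * I t) t)
    (hSnn : ∀ t ≥ (0:ℝ), 0 ≤ S t) (hInn : ∀ t ≥ (0:ℝ), 0 ≤ I t) (hS0 : β * S 0 ≤ γ) :
    AntitoneOn I (Ici 0) :=
  antitoneOn_Ici_of_hasDerivAt_nonpos hI' fun t ht ↦ by
    have hSt := sir_susceptible_antitoneOn hβ hS' hSnn hInn self_mem_Ici ht ht
    have := mul_nonneg (hInn t ht) (sub_nonneg.2 (hS0.trans' (mul_le_mul_of_nonneg_left hSt hβ)))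
    linarith

lemma sir_conserved (hβ : β ≠ 0) (hS' : ∀ t ≥ (0:ℝ), HasDerivAt S (-β * S t * I t) t)
    (hI' : ∀ t ≥ (0:ℝ), HasDerivAt I (β * S t * I t - γ * I t) t)
    (hSpos : ∀ t ≥ (0:ℝ), 0 < S t) :
    ∀ t ≥ (0:ℝ), I t + S t - γ / β * log (S t) = I 0 + S 0 - γ / β * log (S 0) :=
  eq_of_hasDerivAt_zero_Ici (f := fun t ↦ I t + S t - γ / β * log (S t)) fun t ht ↦
    (((hI' t ht).add (hS' t ht)).sub (((hS' t ht).log (hSpos t ht).ne').const_mul (γ / β))).congr_deriv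
      (by field_simp [(hSpos t ht).ne']; ring)

lemma sir_infected_le (hβ : 0 < β) (hγ : 0 < γ)
    (hS' : ∀ t ≥ (0:ℝ), HasDerivAt S (-β * S t * I t) t)
    (hI' : ∀ t ≥ (0:ℝ), HasDerivAt I (β * S t * I t - γ * I t) t)
    (hSpos : ∀ t ≥ (0:ℝ), 0 < S t) (hS0 : γ / β ≤ S 0) :
    ∀ t ≥ (0:ℝ), I t ≤ I 0 + S 0 - γ / β := by
  intro t ht
  have hc : 0 < γ / β := div_pos hγ hβ
  have hV := sir_conserved hβ.ne' hS' hI' hSpos t ht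
  have hmin := self_sub_mul_log_self_le hc (hSpos t ht)
  have hlog := mul_le_mul_of_nonneg_left (log_le_log hc hS0) hc.le
  linarith

end SIR

theorem sir_threshold_sufficient_general
    (N γ R₀ M : ℝ) (S I R : ℝ → ℝ)
    (hN : 0 < N) (hγ : 0 < γ) (hR₀ : 0 < R₀)
    (hS' : ∀ t ≥ (0:ℝ), HasDerivAt S (-(γ * R₀ / N) * S t * I t) t)
    (hI' : ∀ t ≥ (0:ℝ), HasDerivAt I ((γ * R₀ / N) * S t * I t - γ * I t) t)
    (hSnn : ∀ t ≥ (0:ℝ), 0 ≤ S t) (hInn : ∀ t ≥ (0:ℝ), 0 ≤ I t)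
    (hRnn : ∀ t ≥ (0:ℝ), 0 ≤ R t)
    (hsum : ∀ t ≥ (0:ℝ), S t + I t + R t = N)
    (hS0 : 0 < S 0)
    (hMN : M < N)
    (hcond : (R₀ ≤ N / S 0 ∧ I 0 ≤ M) ∨ (N / S 0 < R₀ ∧ R₀ ≤ N / (N - M))) :
    ∀ t ≥ (0:ℝ), I t ≤ M := by
  have hβ : 0 < γ * R₀ / N := by positivity
  rcases hcond with ⟨hR₀S0, hI0⟩ | ⟨hS0R₀, hR₀M⟩
  · have hβS0 : γ * R₀ / N * S 0 ≤ γ := by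
      rw [le_div_iff₀ hS0] at hR₀S0
      rw [div_mul_eq_mul_div, div_le_iff₀ hN, mul_assoc]
      exact mul_le_mul_of_nonneg_left hR₀S0 hγ.le
    exact fun t ht ↦
      (sir_infected_antitoneOn hβ.le hS' hI' hSnn hInn hβS0 self_mem_Ici ht ht).trans hI0
  · have hIle : ∀ t ≥ (0:ℝ), I t ≤ N := fun t ht ↦ by linarith [hsum t ht, hSnn t ht, hRnn t ht]
    have hSpos := sir_susceptible_pos hβ.le hS' hSnn hIle hS0
    have hγβ : γ / (γ * R₀ / N) = N / R₀ := by field_simp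
    have hcS0 : N / R₀ ≤ S 0 := by
      rw [div_le_iff₀ hR₀]; rw [div_lt_iff₀ hS0] at hS0R₀; linarith
    have hcM : N - N / R₀ ≤ M := by
      rw [le_div_iff₀ (sub_pos.2 hMN)] at hR₀M
      rw [sub_le_comm, le_div_iff₀ hR₀]; linarith
    intro t ht
    have h := sir_infected_le hβ hγ hS' hI' hSpos (hγβ ▸ hcS0) t ht
    rw [hγβ] at h
    linarith [hsum 0 le_rfl, hRnn 0 le_rfl]

/-- In the SIR model, if either (i) R₀ ≤ N/S(0) and I(0) ≤ M, or
(ii) N/S(0) < R₀ ≤ N/(N−M), then I(t) ≤ M for all t ≥ 0. -/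
theorem sir_threshold_sufficient
    (N γ R₀ M : ℝ) (S I R : ℝ → ℝ)
    (hN : 0 < N) (hγ : 0 < γ) (hR₀ : 0 < R₀)
    (hS' : ∀ t ≥ (0:ℝ), HasDerivAt S (-(γ * R₀ / N) * S t * I t) t)
    (hI' : ∀ t ≥ (0:ℝ), HasDerivAt I ((γ * R₀ / N) * S t * I t - γ * I t) t)
    (hR' : ∀ t ≥ (0:ℝ), HasDerivAt R (γ * I t) t)
    (hSnn : ∀ t ≥ (0:ℝ), 0 ≤ S t) (hInn : ∀ t ≥ (0:ℝ), 0 ≤ I t)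
    (hRnn : ∀ t ≥ (0:ℝ), 0 ≤ R t)
    (hsum : ∀ t ≥ (0:ℝ), S t + I t + R t = N)
    (hS0 : 0 < S 0) (hI0 : 0 < I 0)
    (hM : 0 < M) (hMN : M < N)
    (hcond : (R₀ ≤ N / S 0 ∧ I 0 ≤ M) ∨ (N / S 0 < R₀ ∧ R₀ ≤ N / (N - M))) :
    ∀ t ≥ (0:ℝ), I t ≤ M :=
  sir_threshold_sufficient_general N γ R₀ M S I R hN hγ hR₀ hS' hI' hSnn hInn hRnn hsum hS0 hMN
    hcond
end

section
/- In the SIR model with S(t) > 0 for all t ≥ 0, the infected population satisfies I(t) ≤ (N/R₀)·(ln(N/(R₀·S(0))) − 1) − R(0) + N for all t ≥ 0. -/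
/-!
Along a trajectory with `S > 0` the quantity `V = S + I - (N/R₀) log S` is conserved: its
derivative is `-γ I + (N/R₀)(γR₀/N) I = 0`. Hence `I t = V 0 - (S t - (N/R₀) log (S t))`, where
`V 0 = N - R 0 - (N/R₀) log (S 0)`, and `x - a log x` is minimised at `x = a` with value
`a (1 - log a)`.
-/

open Real

theorem eq_of_forall_ge_hasDerivAt_zero {E : Type*} [NormedAddCommGroup E] [NormedSpace ℝ E]
    {f : ℝ → E} {a t : ℝ} (hf : ∀ u ≥ a, HasDerivAt f 0 u) (ht : a ≤ t) : f t = f a :=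
  constant_of_has_deriv_right_zero (fun u hu => (hf u hu.1).continuousAt.continuousWithinAt)
    (fun u hu => (hf u hu.1).hasDerivWithinAt) t ⟨ht, le_rfl⟩

theorem mul_log_sub_le_mul_log_sub_one {a x : ℝ} (ha : 0 < a) (hx : 0 < x) :
    a * log x - x ≤ a * (log a - 1) := by
  have h := log_le_sub_one_of_pos (div_pos hx ha)
  rw [log_div hx.ne' ha.ne'] at h
  have hax : a * (x / a) = x := mul_div_cancel₀ x ha.ne'
  nlinarith [mul_le_mul_of_nonneg_left h ha.le]

noncomputable def sirInvariant (N R₀ : ℝ) (S I : ℝ → ℝ) (t : ℝ) : ℝ :=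
  S t + I t - N / R₀ * log (S t)

theorem hasDerivAt_sirInvariant {N γ R₀ t : ℝ} {S I : ℝ → ℝ} (hN : N ≠ 0) (hR₀ : R₀ ≠ 0)
    (hS' : HasDerivAt S (-(γ * R₀ / N) * S t * I t) t)
    (hI' : HasDerivAt I ((γ * R₀ / N) * S t * I t - γ * I t) t) (hS : S t ≠ 0) :
    HasDerivAt (sirInvariant N R₀ S I) 0 t := by
  refine ((hS'.add hI').sub ((hS'.log hS).const_mul (N / R₀))).congr_deriv ?_
  field_simp
  ring

theorem sirInvariant_eq {N γ R₀ : ℝ} {S I : ℝ → ℝ} (hN : N ≠ 0) (hR₀ : R₀ ≠ 0)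
    (hS' : ∀ t ≥ (0:ℝ), HasDerivAt S (-(γ * R₀ / N) * S t * I t) t)
    (hI' : ∀ t ≥ (0:ℝ), HasDerivAt I ((γ * R₀ / N) * S t * I t - γ * I t) t)
    (hSpos : ∀ t ≥ (0:ℝ), 0 < S t) {t : ℝ} (ht : 0 ≤ t) :
    sirInvariant N R₀ S I t = sirInvariant N R₀ S I 0 :=
  eq_of_forall_ge_hasDerivAt_zero
    (fun u hu => hasDerivAt_sirInvariant hN hR₀ (hS' u hu) (hI' u hu) (hSpos u hu).ne') ht

theorem sir_Imax_upper_bound_general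
    (N γ R₀ : ℝ) (S I R : ℝ → ℝ)
    (hN : 0 < N) (hR₀ : 0 < R₀)
    (hS' : ∀ t ≥ (0:ℝ), HasDerivAt S (-(γ * R₀ / N) * S t * I t) t)
    (hI' : ∀ t ≥ (0:ℝ), HasDerivAt I ((γ * R₀ / N) * S t * I t - γ * I t) t)
    (hSpos : ∀ t ≥ (0:ℝ), 0 < S t)
    (hsum : ∀ t ≥ (0:ℝ), S t + I t + R t = N) :
    ∀ t ≥ (0:ℝ),
      I t ≤ (N / R₀) * (Real.log (N / (R₀ * S 0)) - 1) - R 0 + N := by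
  intro t ht
  have hS0 := hSpos 0 le_rfl
  have hconserved := sirInvariant_eq hN.ne' hR₀.ne' hS' hI' hSpos ht
  have hbound := mul_log_sub_le_mul_log_sub_one (div_pos hN hR₀) (hSpos t ht)
  have hlog : log (N / (R₀ * S 0)) = log (N / R₀) - log (S 0) := by
    rw [← log_div (div_pos hN hR₀).ne' hS0.ne', div_div]
  unfold sirInvariant at hconserved
  rw [hlog]
  linarith [hsum 0 le_rfl]

/-- In the SIR model with S(t) > 0 for all t ≥ 0, the infected population
satisfies I(t) ≤ (N/R₀)·(ln(N/(R₀·S(0))) − 1) − R(0) + N for all t ≥ 0. -/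
theorem sir_Imax_upper_bound
    (N γ R₀ : ℝ) (S I R : ℝ → ℝ)
    (hN : 0 < N) (hγ : 0 < γ) (hR₀ : 0 < R₀)
    (hS' : ∀ t ≥ (0:ℝ), HasDerivAt S (-(γ * R₀ / N) * S t * I t) t)
    (hI' : ∀ t ≥ (0:ℝ), HasDerivAt I ((γ * R₀ / N) * S t * I t - γ * I t) t)
    (hR' : ∀ t ≥ (0:ℝ), HasDerivAt R (γ * I t) t)
    (hSpos : ∀ t ≥ (0:ℝ), 0 < S t)
    (hsum : ∀ t ≥ (0:ℝ), S t + I t + R t = N) :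
    ∀ t ≥ (0:ℝ),
      I t ≤ (N / R₀) * (Real.log (N / (R₀ * S 0)) - 1) - R 0 + N :=
  sir_Imax_upper_bound_general N γ R₀ S I R hN hR₀ hS' hI' hSpos hsum
end

section
/- In the SIR model, the infected population tends to zero: I(t) → 0 as t → ∞. -/
/-!
Since `R' = γ I ≥ 0` and `R ≤ N`, the recovered population increases to a limit. On the other
hand `I'` is bounded, because `S` and `I` stay in `[0, N]`, so `I` is uniformly continuous.
Barbalat's lemma (a convergent function with uniformly continuous derivative has derivative
tending to zero) then gives `γ I → 0`.
-/

open Filter Set Topology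

theorem exists_tendsto_of_monotoneOn_Ici_of_bddAbove {f : ℝ → ℝ} {a : ℝ}
    (hf : MonotoneOn f (Ici a)) (hbdd : BddAbove (f '' Ici a)) :
    ∃ L, Tendsto f atTop (𝓝 L) := by
  have hmono : Monotone fun x : Ici a => f x := fun x y hxy => hf x.2 y.2 hxy
  have hbdd' : BddAbove (range fun x : Ici a => f x) := by rwa [← image_eq_range]
  exact ⟨_, tendsto_comp_val_Ici_atTop.1 (tendsto_atTop_ciSup hmono hbdd')⟩

theorem uniformContinuousOn_of_hasDerivAt_of_abs_le {f f' : ℝ → ℝ} {s : Set ℝ} {C : ℝ}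
    (hs : Convex ℝ s) (hf : ∀ x ∈ s, HasDerivAt f (f' x) x) (hC : ∀ x ∈ s, |f' x| ≤ C) :
    UniformContinuousOn f s := by
  refine (LipschitzOnWith.of_dist_le' (K := C) fun x hx y hy => ?_).uniformContinuousOn
  simpa only [Real.dist_eq, Real.norm_eq_abs, abs_sub_comm] using
    hs.norm_image_sub_le_of_norm_hasDerivWithin_le (fun z hz => (hf z hz).hasDerivWithinAt)
      hC hy hx

theorem tendsto_zero_of_hasDerivAt_of_uniformContinuousOn {f g : ℝ → ℝ} {a L : ℝ}
    (hf : ∀ t ≥ a, HasDerivAt f (g t) t) (hg : UniformContinuousOn g (Ici a))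
    (hfL : Tendsto f atTop (𝓝 L)) : Tendsto g atTop (𝓝 0) := by
  rw [Metric.tendsto_atTop]
  intro ε hε
  obtain ⟨δ, hδ, hgδ⟩ := Metric.uniformContinuousOn_iff.1 hg (ε / 2) (half_pos hε)
  have hincr : Tendsto (fun t => f (t + δ / 2) - f t) atTop (𝓝 0) := by
    simpa using (hfL.comp (tendsto_atTop_add_const_right _ (δ / 2) tendsto_id)).sub hfL
  obtain ⟨T, hT⟩ := Metric.tendsto_atTop.1 hincr (δ / 2 * (ε / 2)) (by positivity)
  refine ⟨max T a, fun t ht => ?_⟩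
  have hta : a ≤ t := le_of_max_le_right ht
  obtain ⟨c, ⟨htc, _⟩, hgc⟩ := exists_hasDerivAt_eq_slope f g (by linarith : t < t + δ / 2)
    (fun x hx => (hf x (hta.trans hx.1)).continuousAt.continuousWithinAt)
    (fun x hx => hf x (hta.trans hx.1.le))
  have hslope : |g c| < ε / 2 := by
    have hincr_t := hT t (le_of_max_le_left ht)
    rw [Real.dist_eq, sub_zero] at hincr_t
    rw [hgc, add_sub_cancel_left, abs_div, abs_of_pos (by positivity : 0 < δ / 2),
      div_lt_iff₀ (by positivity)]
    linarith
  have hclose : |g t - g c| < ε / 2 := by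
    refine hgδ t hta c (hta.trans htc.le) ?_
    rw [Real.dist_eq, abs_sub_comm, abs_of_pos (by linarith)]
    linarith
  calc dist (g t) 0 = |g t - g c + g c| := by rw [Real.dist_eq]; ring_nf
    _ ≤ |g t - g c| + |g c| := abs_add_le _ _
    _ < ε := by linarith

theorem abs_sir_infected_rate_le {β γ N s i : ℝ} (hγ : 0 ≤ γ) (hs₀ : 0 ≤ s) (hs : s ≤ N)
    (hi₀ : 0 ≤ i) (hi : i ≤ N) : |β * s * i - γ * i| ≤ N * (|β| * N + γ) := by
  rw [← sub_mul, abs_mul, abs_of_nonneg hi₀, mul_comm]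
  refine mul_le_mul hi ?_ (abs_nonneg _) (hi₀.trans hi)
  calc |β * s - γ| ≤ |β * s| + |γ| := abs_sub _ _
    _ ≤ |β| * N + γ := by rw [abs_mul, abs_of_nonneg hs₀, abs_of_nonneg hγ]; gcongr

theorem sir_I_tendsto_zero_general
    (N γ R₀ : ℝ) (S I R : ℝ → ℝ)
    (hγ : 0 < γ)
    (hI' : ∀ t ≥ (0:ℝ), HasDerivAt I ((γ * R₀ / N) * S t * I t - γ * I t) t)
    (hR' : ∀ t ≥ (0:ℝ), HasDerivAt R (γ * I t) t)
    (hSnn : ∀ t ≥ (0:ℝ), 0 ≤ S t) (hInn : ∀ t ≥ (0:ℝ), 0 ≤ I t)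
    (hRnn : ∀ t ≥ (0:ℝ), 0 ≤ R t)
    (hsum : ∀ t ≥ (0:ℝ), S t + I t + R t = N) :
    Tendsto I atTop (nhds 0) := by
  have hR_mono : MonotoneOn R (Ici 0) :=
    monotoneOn_of_hasDerivWithinAt_nonneg (convex_Ici 0)
      (fun t ht => (hR' t ht).continuousAt.continuousWithinAt)
      (fun t ht => (hR' t (interior_subset ht)).hasDerivWithinAt)
      (fun t ht => mul_nonneg hγ.le (hInn t (interior_subset ht)))
  obtain ⟨L, hRL⟩ := exists_tendsto_of_monotoneOn_Ici_of_bddAbove hR_mono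
    ⟨N, by rintro _ ⟨t, ht, rfl⟩; linarith [hsum t ht, hSnn t ht, hInn t ht]⟩
  have hI_unif : UniformContinuousOn I (Ici 0) :=
    uniformContinuousOn_of_hasDerivAt_of_abs_le (convex_Ici 0) hI' fun t ht =>
      abs_sir_infected_rate_le (N := N) hγ.le (hSnn t ht)
        (by linarith [hsum t ht, hInn t ht, hRnn t ht]) (hInn t ht)
        (by linarith [hsum t ht, hSnn t ht, hRnn t ht])
  have hγI : Tendsto (fun t => γ * I t) atTop (𝓝 0) :=
    tendsto_zero_of_hasDerivAt_of_uniformContinuousOn hR'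
      (Real.uniformContinuous_const_mul.comp_uniformContinuousOn hI_unif) hRL
  simpa [hγ.ne'] using hγI.const_mul γ⁻¹

/-- In the SIR model, the infected population tends to zero as t → ∞. -/
theorem sir_I_tendsto_zero
    (N γ R₀ : ℝ) (S I R : ℝ → ℝ)
    (hN : 0 < N) (hγ : 0 < γ) (hR₀ : 0 < R₀)
    (hS' : ∀ t ≥ (0:ℝ), HasDerivAt S (-(γ * R₀ / N) * S t * I t) t)
    (hI' : ∀ t ≥ (0:ℝ), HasDerivAt I ((γ * R₀ / N) * S t * I t - γ * I t) t)
    (hR' : ∀ t ≥ (0:ℝ), HasDerivAt R (γ * I t) t)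
    (hSnn : ∀ t ≥ (0:ℝ), 0 ≤ S t) (hInn : ∀ t ≥ (0:ℝ), 0 ≤ I t)
    (hRnn : ∀ t ≥ (0:ℝ), 0 ≤ R t)
    (hsum : ∀ t ≥ (0:ℝ), S t + I t + R t = N) :
    Tendsto I atTop (nhds 0) :=
  sir_I_tendsto_zero_general N γ R₀ S I R hγ hI' hR' hSnn hInn hRnn hsum
end

section
/- Let S₀ > 0, I₀ > 0, R₀c ≥ 0, set N = S₀ + I₀ + R₀c, and define g : (0,∞) → ℝ by g(r) = (N/r)·(ln(N/(r·S₀)) − 1) − R₀c + N. Then for every M with I₀ < M < S₀ + I₀ there exists a unique r* > N/S₀ such that g(r*) = M. -/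
/-!
Substituting `x = N / (r S₀)` maps `r ∈ (N / S₀, ∞)` bijectively onto `x ∈ (0, 1)` (the map is
an involution) and turns `g r` into `S₀ (x log x - x) + S₀ + I₀`. Since `x ↦ x log x - x` has
derivative `log x < 0` on `(0, 1)`, it decreases strictly from `0` to `-1` there, so it attains
each value in `(-1, 0)` exactly once.
-/

open Real Set Function

lemma hasDerivAt_mul_log_sub_self {x : ℝ} (hx : x ≠ 0) :
    HasDerivAt (fun y => y * log y - y) (log x) x := by
  have := (hasDerivAt_mul_log hx).sub (hasDerivAt_id' x)
  rwa [add_sub_cancel_right] at this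

lemma continuous_mul_log_sub_self : Continuous fun x : ℝ => x * log x - x :=
  continuous_mul_log.sub continuous_id

lemma strictAntiOn_mul_log_sub_self : StrictAntiOn (fun x : ℝ => x * log x - x) (Icc 0 1) := by
  refine strictAntiOn_of_deriv_neg (convex_Icc 0 1) continuous_mul_log_sub_self.continuousOn ?_
  intro x hx
  rw [interior_Icc] at hx
  rw [(hasDerivAt_mul_log_sub_self hx.1.ne').deriv]
  exact log_neg hx.1 hx.2

lemma existsUnique_mul_log_sub_self_eq {c : ℝ} (hc₀ : -1 < c) (hc₁ : c < 0) :
    ∃! x : ℝ, x ∈ Ioo 0 1 ∧ x * log x - x = c := by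
  obtain ⟨x, hx, hxc⟩ : ∃ x ∈ Icc (0 : ℝ) 1, x * log x - x = c :=
    intermediate_value_Icc' zero_le_one continuous_mul_log_sub_self.continuousOn
      (by
        simp only [log_zero, log_one, mul_zero, zero_sub, sub_zero, mem_Icc]
        constructor <;> linarith)
  have hx₀ : x ≠ 0 := by rintro rfl; norm_num at hxc; linarith
  have hx₁ : x ≠ 1 := by rintro rfl; norm_num at hxc; linarith
  refine ⟨x, ⟨⟨lt_of_le_of_ne hx.1 hx₀.symm, lt_of_le_of_ne hx.2 hx₁⟩, hxc⟩, ?_⟩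
  rintro y ⟨hy, hyc⟩
  exact strictAntiOn_mul_log_sub_self.injOn (Ioo_subset_Icc_self hy) hx (hyc.trans hxc.symm)

lemma involutive_div_mul {N S : ℝ} (hN : N ≠ 0) (hS : S ≠ 0) :
    Involutive fun r : ℝ => N / (r * S) := by
  intro r
  rcases eq_or_ne r 0 with rfl | hr
  · simp
  · field_simp

lemma div_mul_mem_Ioo_zero_one_iff {N S r : ℝ} (hN : 0 < N) (hS : 0 < S) :
    N / (r * S) ∈ Ioo 0 1 ↔ N / S < r := by
  rcases le_or_gt r 0 with hr | hr
  · have hx : N / (r * S) ≤ 0 :=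
      div_nonpos_of_nonneg_of_nonpos hN.le (mul_nonpos_of_nonpos_of_nonneg hr hS.le)
    have hNS : 0 < N / S := div_pos hN hS
    exact iff_of_false (fun h => h.1.not_ge hx) (by linarith)
  · rw [mem_Ioo, div_lt_one (by positivity), div_lt_iff₀ hS]
    exact and_iff_right (by positivity)

/-- With S₀, I₀ > 0, R₀c ≥ 0, N = S₀ + I₀ + R₀c and
g(r) = (N/r)·(ln(N/(r·S₀)) − 1) − R₀c + N, for every M with I₀ < M < S₀ + I₀ there is
a unique r* > N/S₀ with g(r*) = M. -/
theorem critical_R0_exists_unique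
    (S₀ I₀ R₀c N : ℝ) (hS₀ : 0 < S₀) (hI₀ : 0 < I₀) (hR₀c : 0 ≤ R₀c)
    (hNdef : N = S₀ + I₀ + R₀c)
    (g : ℝ → ℝ)
    (hg : ∀ r, g r = (N / r) * (Real.log (N / (r * S₀)) - 1) - R₀c + N) :
    ∀ M : ℝ, I₀ < M → M < S₀ + I₀ → ∃! r : ℝ, N / S₀ < r ∧ g r = M := by
  intro M hM₁ hM₂
  have hN : 0 < N := by linarith
  set x : ℝ → ℝ := fun r => N / (r * S₀) with hx
  have hg_x : ∀ r, g r = S₀ * (x r * log (x r) - x r) + S₀ + I₀ := fun r => by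
    have : S₀ * x r = N / r := by rw [hx]; field_simp
    rw [hg]
    linear_combination (1 - log (x r)) * this + hNdef
  have hsubst : ∀ r, (N / S₀ < r ∧ g r = M) ↔
      (x r ∈ Ioo 0 1 ∧ x r * log (x r) - x r = (M - S₀ - I₀) / S₀) := fun r => by
    rw [div_mul_mem_Ioo_zero_one_iff hN hS₀, hg_x, eq_div_iff hS₀.ne']
    constructor <;> rintro ⟨hr, h⟩ <;> exact ⟨hr, by linarith⟩
  rw [existsUnique_congr hsubst]
  refine ((involutive_div_mul hN.ne' hS₀.ne').toPerm x).existsUnique_congr_right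
    (q := fun y => y ∈ Ioo 0 1 ∧ y * log y - y = (M - S₀ - I₀) / S₀) |>.2 ?_
  exact existsUnique_mul_log_sub_self_eq
    (by rw [lt_div_iff₀ hS₀]; linarith) (by rw [div_neg_iff]; right; constructor <;> linarith)
end

section
/- Let N, R₀, x₀ > 0 and M a real number with 0 < M ≤ N, and define f : (0,∞) → ℝ by f(u) = (N/R₀)·ln(u) − x₀·u + N. If M < (N/R₀)·(ln(N/(R₀·x₀)) − 1) + N, then the equation f(u) = M has exactly two solutions u > 0; if M > (N/R₀)·(ln(N/(R₀·x₀)) − 1) + N, then f(u) = M has no solution u > 0. -/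
/-!
With `c = N / R₀`, the function `u ↦ c log u - x₀ u` has derivative `c / u - x₀`, so it increases
strictly on `(0, c / x₀]` and decreases strictly on `[c / x₀, ∞)`, and it tends to `-∞` both as
`u → 0⁺` and as `u → ∞`. Its maximum is `c (log (c / x₀) - 1)`: a level below the maximum is
attained exactly once on each side of `c / x₀` (intermediate value theorem plus injectivity), a
level above it is never attained.
-/

open Real Set Filter Topology

section UnimodalPreimage

variable {f : ℝ → ℝ} {l p m : ℝ}

theorem le_of_monotoneOn_of_antitoneOn (hmono : MonotoneOn f (Ioc l p))
    (hanti : AntitoneOn f (Ici p)) (hlp : l < p) {u : ℝ} (hu : l < u) : f u ≤ f p := by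
  rcases le_total u p with hup | hpu
  · exact hmono ⟨hu, hup⟩ ⟨hlp, le_rfl⟩ hup
  · exact hanti self_mem_Ici hpu hpu

theorem exists_pair_preimage_of_strictMonoOn_of_strictAntiOn
    (hcont : ContinuousOn f (Ioi l)) (hmono : StrictMonoOn f (Ioc l p))
    (hanti : StrictAntiOn f (Ici p)) (hlp : l < p)
    (hleft : Tendsto f (𝓝[>] l) atBot) (hright : Tendsto f atTop atBot) (hm : m < f p) :
    ∃ u₁ u₂ : ℝ, l < u₁ ∧ l < u₂ ∧ u₁ ≠ u₂ ∧ f u₁ = m ∧ f u₂ = m ∧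
      ∀ u : ℝ, l < u → f u = m → u = u₁ ∨ u = u₂ := by
  obtain ⟨a, hfa, hla, hap⟩ :=
    ((hleft.eventually (eventually_lt_atBot m)).and (Ioo_mem_nhdsGT hlp)).exists
  obtain ⟨b, hfb, hpb⟩ :=
    ((hright.eventually (eventually_lt_atBot m)).and (eventually_gt_atTop p)).exists
  obtain ⟨u₁, ⟨hau₁, hu₁p⟩, hfu₁⟩ := intermediate_value_Ioo hap.le
    (hcont.mono fun u hu => hla.trans_le hu.1) ⟨hfa, hm⟩
  obtain ⟨u₂, ⟨hpu₂, -⟩, hfu₂⟩ := intermediate_value_Ioo' hpb.le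
    (hcont.mono fun u hu => hlp.trans_le hu.1) ⟨hfb, hm⟩
  refine ⟨u₁, u₂, hla.trans hau₁, hlp.trans hpu₂, (hu₁p.trans hpu₂).ne, hfu₁, hfu₂,
    fun u hu hfu => ?_⟩
  rcases le_total u p with hup | hpu
  · exact .inl (hmono.injOn ⟨hu, hup⟩ ⟨hla.trans hau₁, hu₁p.le⟩ (hfu.trans hfu₁.symm))
  · exact .inr (hanti.injOn hpu (mem_Ici.2 hpu₂.le) (hfu.trans hfu₂.symm))

end UnimodalPreimage

section LogSubLinear

variable {c x : ℝ} (d : ℝ)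

theorem hasDerivAt_log_sub_linear {u : ℝ} (hu : u ≠ 0) :
    HasDerivAt (fun v => c * log v - x * v + d) (c / u - x) u := by
  simpa [div_eq_mul_inv] using
    (((hasDerivAt_log hu).const_mul c).sub ((hasDerivAt_id u).const_mul x)).add_const d

theorem continuousOn_log_sub_linear :
    ContinuousOn (fun u => c * log u - x * u + d) (Ioi 0) := fun _ hu =>
  (hasDerivAt_log_sub_linear d (ne_of_gt hu)).continuousAt.continuousWithinAt

theorem strictMonoOn_log_sub_linear (hx : 0 < x) :
    StrictMonoOn (fun u => c * log u - x * u + d) (Ioc 0 (c / x)) := by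
  refine strictMonoOn_of_deriv_pos (convex_Ioc _ _)
    ((continuousOn_log_sub_linear d).mono Ioc_subset_Ioi_self) fun u hu => ?_
  rw [interior_Ioc] at hu
  rw [(hasDerivAt_log_sub_linear d hu.1.ne').deriv, sub_pos, lt_div_iff₀ hu.1]
  exact (lt_div_iff₀' hx).1 hu.2

theorem strictAntiOn_log_sub_linear (hc : 0 < c) (hx : 0 < x) :
    StrictAntiOn (fun u => c * log u - x * u + d) (Ici (c / x)) := by
  have hcx : 0 < c / x := div_pos hc hx
  refine strictAntiOn_of_deriv_neg (convex_Ici _)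
    ((continuousOn_log_sub_linear d).mono fun u hu => hcx.trans_le hu) fun u hu => ?_
  rw [interior_Ici] at hu
  have hu0 : 0 < u := hcx.trans hu
  rw [(hasDerivAt_log_sub_linear d hu0.ne').deriv, sub_neg, div_lt_iff₀ hu0]
  exact (div_lt_iff₀' hx).1 hu

theorem tendsto_log_sub_linear_nhdsGT_zero (hc : 0 < c) :
    Tendsto (fun u => c * log u - x * u + d) (𝓝[>] 0) atBot := by
  have hlin : Tendsto (fun u => -(x * u) + d) (𝓝[>] 0) (𝓝 (-(x * 0) + d)) :=
    (Continuous.tendsto (by fun_prop) 0).mono_left nhdsWithin_le_nhds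
  simpa [sub_eq_add_neg, add_assoc] using
    (tendsto_log_nhdsGT_zero.const_mul_atBot hc).atBot_add hlin

theorem tendsto_log_sub_linear_atTop (hx : 0 < x) :
    Tendsto (fun u => c * log u - x * u + d) atTop atBot := by
  have hslope : Tendsto (fun u => c * (log u / u) - x) atTop (𝓝 (c * 0 - x)) :=
    (isLittleO_log_id_atTop.tendsto_div_nhds_zero.const_mul c).sub_const x
  refine ((tendsto_id.atTop_mul_neg (by linarith) hslope).atBot_add
    (tendsto_const_nhds (x := d))).congr' ?_
  filter_upwards [eventually_gt_atTop 0] with u hu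
  simp only [id]
  field_simp

end LogSubLinear

theorem parametric_I_equals_M_solutions_general
    (N R₀ x₀ M : ℝ) (hN : 0 < N) (hR₀ : 0 < R₀) (hx₀ : 0 < x₀)
    (f : ℝ → ℝ) (hf : ∀ u, f u = (N / R₀) * Real.log u - x₀ * u + N) :
    (M < (N / R₀) * (Real.log (N / (R₀ * x₀)) - 1) + N →
      ∃ u₁ u₂ : ℝ, 0 < u₁ ∧ 0 < u₂ ∧ u₁ ≠ u₂ ∧ f u₁ = M ∧ f u₂ = M ∧
        ∀ u : ℝ, 0 < u → f u = M → u = u₁ ∨ u = u₂) ∧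
    ((N / R₀) * (Real.log (N / (R₀ * x₀)) - 1) + N < M →
      ∀ u : ℝ, 0 < u → f u ≠ M) := by
  obtain rfl : f = fun u => (N / R₀) * Real.log u - x₀ * u + N := funext hf
  have hc : 0 < N / R₀ := div_pos hN hR₀
  have hpeak : (N / R₀) * (Real.log (N / (R₀ * x₀)) - 1) + N =
      (N / R₀) * Real.log (N / R₀ / x₀) - x₀ * (N / R₀ / x₀) + N := by
    rw [← div_div, mul_div_cancel₀ _ hx₀.ne']
    ring
  have hp : 0 < N / R₀ / x₀ := div_pos hc hx₀
  have hmono := strictMonoOn_log_sub_linear (c := N / R₀) N hx₀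
  have hanti := strictAntiOn_log_sub_linear N hc hx₀
  rw [hpeak]
  exact ⟨exists_pair_preimage_of_strictMonoOn_of_strictAntiOn (continuousOn_log_sub_linear N)
      hmono hanti hp (tendsto_log_sub_linear_nhdsGT_zero N hc) (tendsto_log_sub_linear_atTop N hx₀),
    fun hM u hu =>
      ((le_of_monotoneOn_of_antitoneOn hmono.monotoneOn hanti.antitoneOn hp hu).trans_lt hM).ne⟩

/-- For N, R₀, x₀ > 0, 0 < M ≤ N, and f(u) = (N/R₀)·ln(u) − x₀·u + N:
if M < (N/R₀)·(ln(N/(R₀·x₀)) − 1) + N then f(u) = M has exactly two solutions u > 0;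
if M > (N/R₀)·(ln(N/(R₀·x₀)) − 1) + N then f(u) = M has no solution u > 0. -/
theorem parametric_I_equals_M_solutions
    (N R₀ x₀ M : ℝ) (hN : 0 < N) (hR₀ : 0 < R₀) (hx₀ : 0 < x₀)
    (hM : 0 < M) (hMN : M ≤ N)
    (f : ℝ → ℝ) (hf : ∀ u, f u = (N / R₀) * Real.log u - x₀ * u + N) :
    (M < (N / R₀) * (Real.log (N / (R₀ * x₀)) - 1) + N →
      ∃ u₁ u₂ : ℝ, 0 < u₁ ∧ 0 < u₂ ∧ u₁ ≠ u₂ ∧ f u₁ = M ∧ f u₂ = M ∧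
        ∀ u : ℝ, 0 < u → f u = M → u = u₁ ∨ u = u₂) ∧
    ((N / R₀) * (Real.log (N / (R₀ * x₀)) - 1) + N < M →
      ∀ u : ℝ, 0 < u → f u ≠ M) :=
  parametric_I_equals_M_solutions_general N R₀ x₀ M hN hR₀ hx₀ f hf
end

section
/- Let a, b be real numbers with b ≠ 0, and consider the equation v·ln(v) = a·v + b for v > 0. If b·e^(1−a) < −1, the equation has no solution. If −1 < b·e^(1−a) < 0, it has exactly two solutions. If b·e^(1−a) = −1 or b·e^(−a) > 0, it has exactly one solution. -/
/-!
The function `f v = v log v - a v` is continuous on `[0, ∞)` with `f 0 = 0` and has derivative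
`log v + 1 - a`. So it decreases strictly on `[0, e^(a-1)]` down to its minimum `-e^(a-1)` and then
increases strictly to `+∞`. Hence `f v = b` has no positive solution for `b < -e^(a-1)`, one for
`b = -e^(a-1)`, two for `-e^(a-1) < b < 0` and one for `b ≥ 0`; multiplying by `e^(1-a)` turns
these thresholds into those of the statement.
-/

open Real Set Filter

namespace MulLogSubMul

variable (a : ℝ)

theorem continuous : Continuous fun v : ℝ => v * log v - a * v :=
  continuous_mul_log.sub (continuous_const.mul continuous_id)

theorem hasDerivAt {v : ℝ} (hv : v ≠ 0) :
    HasDerivAt (fun v => v * log v - a * v) (log v + 1 - a) v := by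
  have := (hasDerivAt_mul_log hv).sub ((hasDerivAt_id' v).const_mul a)
  rwa [mul_one] at this

theorem strictAntiOn : StrictAntiOn (fun v => v * log v - a * v) (Icc 0 (exp (a - 1))) := by
  refine strictAntiOn_of_hasDerivWithinAt_neg (convex_Icc _ _) (continuous a).continuousOn
    (fun v hv => (hasDerivAt a ?_).hasDerivWithinAt) fun v hv => ?_
  all_goals rw [interior_Icc] at hv
  · exact hv.1.ne'
  · linarith [(log_lt_iff_lt_exp hv.1).2 hv.2]

theorem strictMonoOn : StrictMonoOn (fun v => v * log v - a * v) (Ici (exp (a - 1))) := by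
  refine strictMonoOn_of_hasDerivWithinAt_pos (convex_Ici _) (continuous a).continuousOn
    (fun v hv => (hasDerivAt a ?_).hasDerivWithinAt) fun v hv => ?_
  all_goals rw [interior_Ici] at hv
  · exact ((exp_pos _).trans hv).ne'
  · linarith [(lt_log_iff_exp_lt ((exp_pos _).trans hv)).2 hv]

theorem tendsto_atTop : Tendsto (fun v => v * log v - a * v) atTop atTop := by
  have : Tendsto (fun v => v * (log v - a)) atTop atTop :=
    tendsto_id.atTop_mul_atTop₀ (tendsto_atTop_add_const_right _ _ tendsto_log_atTop)
  simpa only [mul_sub, mul_comm _ a] using this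

theorem apply_exp_sub_one :
    exp (a - 1) * log (exp (a - 1)) - a * exp (a - 1) = -exp (a - 1) := by
  rw [log_exp]; ring

theorem neg_exp_lt {v : ℝ} (hv : 0 ≤ v) (hne : v ≠ exp (a - 1)) :
    -exp (a - 1) < v * log v - a * v := by
  rw [← apply_exp_sub_one]
  rcases hne.lt_or_gt with hlt | hgt
  · exact strictAntiOn a ⟨hv, hlt.le⟩ ⟨(exp_pos _).le, le_rfl⟩ hlt
  · exact strictMonoOn a self_mem_Ici hgt.le hgt

theorem neg_exp_le {v : ℝ} (hv : 0 ≤ v) : -exp (a - 1) ≤ v * log v - a * v := by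
  rcases eq_or_ne v (exp (a - 1)) with rfl | hne
  · exact (apply_exp_sub_one a).ge
  · exact (neg_exp_lt a hv hne).le

theorem neg_of_le_exp {v : ℝ} (hv : 0 < v) (hvm : v ≤ exp (a - 1)) : v * log v - a * v < 0 := by
  simpa using strictAntiOn a ⟨le_rfl, (exp_pos _).le⟩ ⟨hv.le, hvm⟩ hv

theorem exists_mem_Ioo_eq {b : ℝ} (hb : b ∈ Ioo (-exp (a - 1)) 0) :
    ∃ v ∈ Ioo 0 (exp (a - 1)), v * log v - a * v = b := by
  refine intermediate_value_Ioo' (exp_pos _).le (continuous a).continuousOn ?_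
  rwa [apply_exp_sub_one, zero_mul, mul_zero, sub_zero]

theorem exists_mem_Ioi_eq {b : ℝ} (hb : -exp (a - 1) < b) :
    ∃ v ∈ Ioi (exp (a - 1)), v * log v - a * v = b :=
  intermediate_value_Ioi (continuous a).continuousOn (tendsto_atTop a)
    (by rwa [mem_Ioi, apply_exp_sub_one])

end MulLogSubMul

open MulLogSubMul

variable {a b : ℝ}

theorem not_exists_pos_mul_log_eq (hb : b < -exp (a - 1)) :
    ¬∃ v : ℝ, 0 < v ∧ v * log v = a * v + b := by
  rintro ⟨v, hv, h⟩
  linarith [neg_exp_le a hv.le]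

theorem exists_two_pos_mul_log_eq (h₁ : -exp (a - 1) < b) (h₀ : b < 0) :
    ∃ v₁ v₂ : ℝ, 0 < v₁ ∧ 0 < v₂ ∧ v₁ ≠ v₂ ∧
      v₁ * log v₁ = a * v₁ + b ∧ v₂ * log v₂ = a * v₂ + b ∧
      ∀ v : ℝ, 0 < v → v * log v = a * v + b → v = v₁ ∨ v = v₂ := by
  obtain ⟨v₁, hv₁, e₁⟩ := exists_mem_Ioo_eq a ⟨h₁, h₀⟩
  obtain ⟨v₂, hv₂, e₂⟩ := exists_mem_Ioi_eq a h₁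
  refine ⟨v₁, v₂, hv₁.1, (exp_pos _).trans hv₂, (hv₁.2.trans hv₂).ne, by linarith, by linarith,
    fun v hv e => ?_⟩
  rcases le_or_gt v (exp (a - 1)) with hvm | hvm
  · exact .inl <|
      (strictAntiOn a).injOn ⟨hv.le, hvm⟩ (Ioo_subset_Icc_self hv₁) (by linarith)
  · exact .inr <| (strictMonoOn a).injOn hvm.le (Ioi_subset_Ici_self hv₂) (by linarith)

theorem existsUnique_pos_mul_log_eq_of_eq (hb : b = -exp (a - 1)) :
    ∃! v : ℝ, 0 < v ∧ v * log v = a * v + b := by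
  refine ⟨exp (a - 1), ⟨exp_pos _, by linarith [apply_exp_sub_one a]⟩,
    fun v ⟨hv, e⟩ => ?_⟩
  by_contra hne
  linarith [neg_exp_lt a hv.le hne]

theorem existsUnique_pos_mul_log_eq_of_nonneg (hb : 0 ≤ b) :
    ∃! v : ℝ, 0 < v ∧ v * log v = a * v + b := by
  obtain ⟨v₀, hv₀, e₀⟩ := exists_mem_Ioi_eq a ((neg_neg_of_pos (exp_pos _)).trans_le hb)
  refine ⟨v₀, ⟨(exp_pos _).trans hv₀, by linarith⟩, fun v ⟨hv, e⟩ => ?_⟩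
  have hvm : exp (a - 1) ≤ v := by
    by_contra! hvm
    linarith [neg_of_le_exp a hv hvm.le]
  exact (strictMonoOn a).injOn hvm (Ioi_subset_Ici_self hv₀) (by linarith)

theorem vlogv_eq_linear_solution_count_general (a b : ℝ) :
    (b * Real.exp (1 - a) < -1 →
      ¬∃ v : ℝ, 0 < v ∧ v * Real.log v = a * v + b) ∧
    (-1 < b * Real.exp (1 - a) → b * Real.exp (1 - a) < 0 →
      ∃ v₁ v₂ : ℝ, 0 < v₁ ∧ 0 < v₂ ∧ v₁ ≠ v₂ ∧
        v₁ * Real.log v₁ = a * v₁ + b ∧ v₂ * Real.log v₂ = a * v₂ + b ∧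
        ∀ v : ℝ, 0 < v → v * Real.log v = a * v + b → v = v₁ ∨ v = v₂) ∧
    (b * Real.exp (1 - a) = -1 ∨ 0 < b * Real.exp (-a) →
      ∃! v : ℝ, 0 < v ∧ v * Real.log v = a * v + b) := by
  have hm := exp_pos (a - 1)
  have hb : b * exp (1 - a) * exp (a - 1) = b := by
    rw [mul_assoc, ← exp_add, sub_add_sub_cancel', sub_self, exp_zero, mul_one]
  refine ⟨fun h => not_exists_pos_mul_log_eq (by nlinarith),
    fun h₁ h₀ => exists_two_pos_mul_log_eq (by nlinarith) (by nlinarith), ?_⟩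
  rintro (h | h)
  · exact existsUnique_pos_mul_log_eq_of_eq (by rw [← hb, h, neg_one_mul])
  · exact existsUnique_pos_mul_log_eq_of_nonneg (pos_of_mul_pos_left h (exp_pos _).le).le

/-- For b ≠ 0, solutions v > 0 of v·ln(v) = a·v + b: none if
b·e^(1−a) < −1; exactly two if −1 < b·e^(1−a) < 0; exactly one if b·e^(1−a) = −1 or
b·e^(−a) > 0. -/
theorem vlogv_eq_linear_solution_count (a b : ℝ) (hb : b ≠ 0) :
    (b * Real.exp (1 - a) < -1 →
      ¬∃ v : ℝ, 0 < v ∧ v * Real.log v = a * v + b) ∧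
    (-1 < b * Real.exp (1 - a) → b * Real.exp (1 - a) < 0 →
      ∃ v₁ v₂ : ℝ, 0 < v₁ ∧ 0 < v₂ ∧ v₁ ≠ v₂ ∧
        v₁ * Real.log v₁ = a * v₁ + b ∧ v₂ * Real.log v₂ = a * v₂ + b ∧
        ∀ v : ℝ, 0 < v → v * Real.log v = a * v + b → v = v₁ ∨ v = v₂) ∧
    (b * Real.exp (1 - a) = -1 ∨ 0 < b * Real.exp (-a) →
      ∃! v : ℝ, 0 < v ∧ v * Real.log v = a * v + b) :=
  vlogv_eq_linear_solution_count_general a b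
end
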